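/- (Gauss–Bonnet with Levitt curvature) Let G be a finite abstract simplicial complex with vertex set V(G). Then χ(G) = Σ_{v ∈ V(G)} K(v), where the Levitt curvature at a vertex v is K(v) = Σ_{k=−1}^{dim S(v)} (−1)^{k+1} f_k(S(v))/(k+2) with the convention f_{−1} = 1, i.e. K(v) = 1 − f_0(S(v))/2 + f_1(S(v))/3 − f_2(S(v))/4 + ⋯ (a rational number). -/
import Mathlib


open Finset Polynomial

namespace SphereFormula

variable {V : Type} [DecidableEq V]

/-- A finite abstract simplicial complex: a finite collection of nonempty finite sets
that is closed under taking nonempty subsets. -/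
def IsComplex (G : Finset (Finset V)) : Prop :=
  ∀ x ∈ G, x.Nonempty ∧ ∀ y, y ⊆ x → y.Nonempty → y ∈ G

/-- `w x = (-1)^(dim x)` where `dim x = |x| - 1`. -/
def w (x : Finset V) : ℤ := (-1) ^ (x.card - 1)

/-- Euler characteristic of a finite set of simplices: `χ(A) = Σ_{x ∈ A} w x`. -/
def chi (A : Finset (Finset V)) : ℤ := ∑ x ∈ A, w x

/-- The star `U(x) = {y ∈ G : x ⊆ y}`. -/
def star (G : Finset (Finset V)) (x : Finset V) : Finset (Finset V) :=
  G.filter fun y => x ⊆ y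

/-- The unit ball `B(x) = {z ∈ G : z ⊆ y for some y ∈ U(x)}` (closure of the star). -/
def ball (G : Finset (Finset V)) (x : Finset V) : Finset (Finset V) :=
  G.filter fun z => ∃ y ∈ G, x ⊆ y ∧ z ⊆ y

/-- The unit sphere `S(x) = B(x) \ U(x)`. -/
def sphere (G : Finset (Finset V)) (x : Finset V) : Finset (Finset V) :=
  ball G x \ star G x

/-- The vertex set of `G`: those `v` with `{v} ∈ G`. -/
def verts (G : Finset (Finset V)) : Finset V :=
  (G.biUnion id).filter fun v => {v} ∈ G

/-- Contractibility, defined inductively: a single vertex complex is contractible, and `G`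
is contractible if there is `x ∈ G` with both `S(x)` and `G \ U(x)` contractible. -/
inductive Contractible : Finset (Finset V) → Prop where
  | point (v : V) : Contractible ({({v} : Finset V)} : Finset (Finset V))
  | step (G : Finset (Finset V)) (x : Finset V) (hx : x ∈ G)
      (hS : Contractible (sphere G x)) (hG : Contractible (G \ star G x)) :
      Contractible G

mutual
  /-- `G` is a `d`-manifold (`d ≥ 0`): every unit sphere `S(x)` is a `(d-1)`-sphere. -/
  inductive IsManifold : ℤ → Finset (Finset V) → Prop where
    | mk (d : ℤ) (G : Finset (Finset V)) (hd : 0 ≤ d)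
        (h : ∀ x ∈ G, IsSphere (d - 1) (sphere G x)) : IsManifold d G

  /-- `d`-spheres: the empty complex is the `(-1)`-sphere, and a `d`-sphere is a
  `d`-manifold `G` such that `G \ U(x)` is contractible for some `x ∈ G`. -/
  inductive IsSphere : ℤ → Finset (Finset V) → Prop where
    | empty : IsSphere (-1) (∅ : Finset (Finset V))
    | mk (d : ℤ) (G : Finset (Finset V)) (hm : IsManifold d G)
        (h : ∃ x ∈ G, Contractible (G \ star G x)) : IsSphere d G
end

/-- The f-function `f_G(t) = 1 + Σ_{k ≥ 0} f_k(G) t^(k+1) = 1 + Σ_{x ∈ G} t^|x|`. -/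
noncomputable def fPoly (G : Finset (Finset V)) : Polynomial ℚ :=
  1 + ∑ x ∈ G, Polynomial.X ^ x.card

/-- `F_H(t) = ∫_0^t f_H(s) ds = t + Σ_{k ≥ 0} f_k(H) t^(k+2)/(k+2)`. -/
noncomputable def FPoly (H : Finset (Finset V)) : Polynomial ℚ :=
  Polynomial.X +
    ∑ x ∈ H, Polynomial.C (((x.card : ℚ) + 1)⁻¹) * Polynomial.X ^ (x.card + 1)

/-- The join `G + H = G ∪ H ∪ {x ∪ y : x ∈ G, y ∈ H}`. -/
def joinC (G H : Finset (Finset V)) : Finset (Finset V) :=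
  G ∪ H ∪ (G ×ˢ H).image fun p => p.1 ∪ p.2

/-- The barycentric refinement: simplices are the nonempty chains in `(G, ⊆)`. -/
def bary (G : Finset (Finset V)) : Finset (Finset (Finset V)) :=
  G.powerset.filter fun c => c.Nonempty ∧ ∀ x ∈ c, ∀ y ∈ c, x ⊆ y ∨ y ⊆ x

/-- `f` is locally injective: distinct vertices of a common simplex have distinct values. -/
def LocallyInjective (G : Finset (Finset V)) (f : V → ℤ) : Prop :=
  ∀ x ∈ G, ∀ v ∈ x, ∀ u ∈ x, v ≠ u → f v ≠ f u

lemma mem_sphere_singleton {G : Finset (Finset V)} (hG : IsComplex G) (v : V)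
    (z : Finset V) : z ∈ sphere G {v} ↔ z ∈ G ∧ v ∉ z ∧ insert v z ∈ G := by
  simp only [sphere, star, ball, Finset.mem_sdiff, Finset.mem_filter,
    Finset.singleton_subset_iff]
  constructor
  · rintro ⟨⟨hz, y, hy, hvy, hzy⟩, hns⟩
    refine ⟨hz, fun hvz => hns ⟨hz, hvz⟩, ?_⟩
    exact (hG y hy).2 (insert v z) (Finset.insert_subset hvy hzy)
      (Finset.insert_nonempty _ _)
  · rintro ⟨hz, hvz, hins⟩
    exact ⟨⟨hz, insert v z, hins, Finset.mem_insert_self _ _,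
      Finset.subset_insert _ _⟩, fun h => hvz h.2⟩

/-- Gauss–Bonnet with Levitt curvature: `χ(G) = Σ_{v ∈ V(G)} K(v)` where
`K(v) = 1 - f_0(S(v))/2 + f_1(S(v))/3 - ⋯ = 1 + Σ_{x ∈ S(v)} (-1)^{|x|}/(|x|+1)`
(the term `(-1)^{k+1} f_k(S(v))/(k+2)` regrouped over the `k`-simplices `x` of `S(v)`,
with the `k = -1` convention `f_{-1} = 1` giving the leading `1`). -/
theorem gauss_bonnet_levitt {V : Type} [DecidableEq V] (G : Finset (Finset V))
    (hG : IsComplex G) :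
    (chi G : ℚ) = ∑ v ∈ verts G,
      (1 + ∑ x ∈ sphere G {v}, (-1 : ℚ) ^ x.card / ((x.card : ℚ) + 1)) := by
  classical
  have hchi : (chi G : ℚ)
      = ∑ x ∈ G, ∑ v ∈ x, (-1 : ℚ) ^ (x.card - 1) / (x.card : ℚ) := by
    unfold chi w
    push_cast
    refine Finset.sum_congr rfl fun x hx => ?_
    rw [Finset.sum_const, nsmul_eq_mul]
    have hc : (0 : ℚ) < (x.card : ℚ) := by
      exact_mod_cast Finset.card_pos.mpr (hG x hx).1
    field_simp
  rw [hchi]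
  have hswap : (∑ x ∈ G, ∑ v ∈ x, (-1 : ℚ) ^ (x.card - 1) / (x.card : ℚ))
      = ∑ v ∈ verts G, ∑ x ∈ star G {v},
          (-1 : ℚ) ^ (x.card - 1) / (x.card : ℚ) := by
    refine Finset.sum_comm' ?_
    intro x v
    simp only [star, verts, Finset.mem_filter, Finset.mem_biUnion, id]
    constructor
    · rintro ⟨hx, hv⟩
      refine ⟨⟨hx, Finset.singleton_subset_iff.mpr hv⟩, ⟨x, hx, hv⟩,
        (hG x hx).2 {v} (Finset.singleton_subset_iff.mpr hv)
          (Finset.singleton_nonempty v)⟩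
    · rintro ⟨⟨hx, hv⟩, _⟩
      exact ⟨hx, Finset.singleton_subset_iff.mp hv⟩
  rw [hswap]
  refine Finset.sum_congr rfl fun v hv => ?_
  have hvG : ({v} : Finset V) ∈ G := (Finset.mem_filter.mp hv).2
  have hvstar : ({v} : Finset V) ∈ star G {v} :=
    Finset.mem_filter.mpr ⟨hvG, Finset.Subset.refl _⟩
  rw [← Finset.add_sum_erase _ _ hvstar]
  simp only [Finset.card_singleton]
  norm_num
  refine Finset.sum_bij' (fun x _ => x.erase v) (fun z _ => insert v z)
    ?_ ?_ ?_ ?_ ?_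
  · intro x hx
    obtain ⟨hne, hx⟩ := Finset.mem_erase.mp hx
    obtain ⟨hxG, hvx⟩ := Finset.mem_filter.mp hx
    have hvx' : v ∈ x := Finset.singleton_subset_iff.mp hvx
    rw [mem_sphere_singleton hG]
    have herase : (x.erase v).Nonempty := by
      rw [← Finset.card_pos, Finset.card_erase_of_mem hvx']
      have h2 : 1 < x.card := by
        obtain ⟨u, hu, hne'⟩ : ∃ u ∈ x, u ≠ v := by
          by_contra h
          push_neg at h
          exact hne (Finset.eq_singleton_iff_unique_mem.mpr ⟨hvx', h⟩)
        exact Finset.one_lt_card.mpr ⟨u, hu, v, hvx', hne'⟩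
      omega
    refine ⟨(hG x hxG).2 _ (Finset.erase_subset _ _) herase,
      Finset.notMem_erase _ _, ?_⟩
    rwa [Finset.insert_erase hvx']
  · intro z hz
    rw [mem_sphere_singleton hG] at hz
    obtain ⟨hzG, hvz, hins⟩ := hz
    refine Finset.mem_erase.mpr ⟨?_, Finset.mem_filter.mpr ⟨hins,
      Finset.singleton_subset_iff.mpr (Finset.mem_insert_self _ _)⟩⟩
    intro h
    obtain ⟨u, hu⟩ := (hG z hzG).1
    have : u ∈ insert v z := Finset.mem_insert_of_mem hu
    rw [show insert v z = ({v} : Finset V) from h, Finset.mem_singleton] at this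
    exact hvz (this ▸ hu)
  · intro x hx
    obtain ⟨_, hx⟩ := Finset.mem_erase.mp hx
    exact Finset.insert_erase
      (Finset.singleton_subset_iff.mp (Finset.mem_filter.mp hx).2)
  · intro z hz
    rw [mem_sphere_singleton hG] at hz
    exact Finset.erase_insert hz.2.1
  · intro x hx
    obtain ⟨hne, hx⟩ := Finset.mem_erase.mp hx
    have hvx : v ∈ x := Finset.singleton_subset_iff.mp (Finset.mem_filter.mp hx).2
    have h1 : 1 ≤ x.card := Finset.card_pos.mpr ⟨v, hvx⟩
    rw [Finset.card_erase_of_mem hvx]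
    have : (x.card : ℚ) = ((x.card - 1 : ℕ) : ℚ) + 1 := by
      push_cast [h1]; ring
    rw [this]

end SphereFormula
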